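/- Let (k_j, n_j) with k_{j-1} ≤ k_j, n_{j-1} < n_j satisfy the PROVIDENCE condition ω_j(k_j) = σ(k_{j-1}, p_a, p_0, n_{j-1}) · τ_1(k_j - k_{j-1}, p_a, p_0, n_j - n_{j-1}) ≥ 1/α. Then, writing k_min for the least such passing value, Pr[K_j ≥ k_min and K_{j-1} = k_{j-1} | H_0] ≤ α · Pr[K_j ≥ k_min and K_{j-1} = k_{j-1} | H_a], where under hypothesis H (with winner fraction p_0 or p_a) K_{j-1} ~ Bin(n_{j-1}, p) and K_j - K_{j-1} ~ Bin(n_j - n_{j-1}, p) independently. -/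

import Mathlib

open Finset

/-- BRAVO likelihood ratio. -/
noncomputable def sigmaRatio (k n : ℕ) (pa p0 : ℝ) : ℝ :=
  (pa ^ k * (1 - pa) ^ (n - k)) / (p0 ^ k * (1 - p0) ^ (n - k))

/-- Binomial pmf. -/
noncomputable def binPMF (n k : ℕ) (p : ℝ) : ℝ :=
  (n.choose k : ℝ) * p ^ k * (1 - p) ^ (n - k)

/-- Upper tail of the binomial distribution. -/
noncomputable def binTail (k n : ℕ) (p : ℝ) : ℝ :=
  ∑ i ∈ Finset.Icc k n, binPMF n i p

/-- MINERVA/PROVIDENCE first-round tail ratio. -/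
noncomputable def tau1 (k n : ℕ) (pa p0 : ℝ) : ℝ :=
  binTail k n pa / binTail k n p0

/-! The ratio `σ · τ₁` is exactly the likelihood ratio of the event `{K_j ≥ k_min, K_{j-1} = k_{j-1}}`
under `H_a` versus `H_0`, since the binomial coefficient cancels in `σ`. Passing the threshold
`1/α` therefore bounds the `H_0`-probability of that event by `α` times its `H_a`-probability. -/

lemma binPMF_pos {n k : ℕ} {p : ℝ} (hk : k ≤ n) (hp0 : 0 < p) (hp1 : p < 1) :
    0 < binPMF n k p := by
  have hchoose : 0 < (n.choose k : ℝ) := by exact_mod_cast Nat.choose_pos hk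
  have hq : 0 < 1 - p := by linarith
  unfold binPMF
  positivity

lemma binTail_pos {k n : ℕ} {p : ℝ} (hk : k ≤ n) (hp0 : 0 < p) (hp1 : p < 1) :
    0 < binTail k n p :=
  Finset.sum_pos (fun _ hi ↦ binPMF_pos (Finset.mem_Icc.mp hi).2 hp0 hp1)
    ⟨k, Finset.mem_Icc.mpr ⟨le_rfl, hk⟩⟩

lemma sigmaRatio_eq_binPMF_div {k n : ℕ} (pa p0 : ℝ) (hk : k ≤ n) :
    sigmaRatio k n pa p0 = binPMF n k pa / binPMF n k p0 := by
  have hchoose : (n.choose k : ℝ) ≠ 0 := by exact_mod_cast (Nat.choose_pos hk).ne'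
  unfold sigmaRatio binPMF
  rw [mul_assoc, mul_assoc, mul_div_mul_left _ _ hchoose]

lemma sigmaRatio_mul_tau1 {k n : ℕ} (k' m : ℕ) (pa p0 : ℝ) (hk : k ≤ n) :
    sigmaRatio k n pa p0 * tau1 k' m pa p0 =
      (binPMF n k pa * binTail k' m pa) / (binPMF n k p0 * binTail k' m p0) := by
  rw [sigmaRatio_eq_binPMF_div pa p0 hk, tau1, div_mul_div_comm]

lemma le_mul_of_one_div_le_div {α a b : ℝ} (hα : 0 < α) (hb : 0 < b) (h : 1 / α ≤ a / b) :
    b ≤ α * a := by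
  rw [div_le_div_iff₀ hα hb] at h
  linarith

theorem stmt_16_general (p0 pa α : ℝ) (kprev nprev nj kmin : ℕ)
    (h0 : 0 < p0) (h1 : p0 < pa) (h2 : pa < 1)
    (hα0 : 0 < α)
    (hkprev : kprev ≤ nprev)
    (hkmintop : kmin - kprev ≤ nj - nprev)
    (hpass : sigmaRatio kprev nprev pa p0 * tau1 (kmin - kprev) (nj - nprev) pa p0 ≥ 1 / α) :
    binPMF nprev kprev p0 * binTail (kmin - kprev) (nj - nprev) p0 ≤
      α * (binPMF nprev kprev pa * binTail (kmin - kprev) (nj - nprev) pa) := by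
  have hp01 : p0 < 1 := h1.trans h2
  have hnull_pos : 0 < binPMF nprev kprev p0 * binTail (kmin - kprev) (nj - nprev) p0 :=
    mul_pos (binPMF_pos hkprev h0 hp01) (binTail_pos hkmintop h0 hp01)
  rw [sigmaRatio_mul_tau1 _ _ pa p0 hkprev] at hpass
  exact le_mul_of_one_div_le_div hα0 hnull_pos hpass

theorem stmt_16 (p0 pa α : ℝ) (kprev nprev nj kmin : ℕ)
    (h0 : 0 < p0) (h1 : p0 < pa) (h2 : pa < 1)
    (hα0 : 0 < α) (hα1 : α < 1)
    (hkprev : kprev ≤ nprev) (hnn : nprev < nj)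
    (hkmin : kprev ≤ kmin) (hkmintop : kmin - kprev ≤ nj - nprev)
    (hpass : sigmaRatio kprev nprev pa p0 * tau1 (kmin - kprev) (nj - nprev) pa p0 ≥ 1 / α)
    (hleast : ∀ c, kprev ≤ c → c < kmin →
      sigmaRatio kprev nprev pa p0 * tau1 (c - kprev) (nj - nprev) pa p0 < 1 / α) :
    binPMF nprev kprev p0 * binTail (kmin - kprev) (nj - nprev) p0 ≤
      α * (binPMF nprev kprev pa * binTail (kmin - kprev) (nj - nprev) pa) :=
  stmt_16_general p0 pa α kprev nprev nj kmin h0 h1 h2 hα0 hkprev hkmintop hpass
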